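/- arXiv:2110.12337 — 5 statements merged into one kernel-verified Lean document; each statement's English description precedes it below -/
import Mathlib

section
/- For all integers n ≥ 2, C(n³ - ⌊((n-1)³+1)/2⌋, 3n²-3n+1) + C(n³ - ⌊((n-1)³+2)/2⌋, 3n²-3n+1) < C(n³, 3n²-3n+1). -/
/-!
Write `m = (n - 1)³`, `k = 3n² - 3n + 1`, so that `n³ = m + k`, and `a = ⌈m / 2⌉`.
Choosing first `a` then `k` elements out of `m + k`, or first `k` then `a`, gives
`C(m + k, a) C(m + k - a, k) = C(m + k, k) C(m, a)`, so the claim reduces to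
`2 C(m, a) < C(m + k, a)`. Since `k ≥ 2` it is enough that `2 C(m, a) < C(m + 2, a)`, which
follows from Pascal's rule and `C(m, a) < 2 C(m, a - 1)`; the latter holds because `a` lies just
above the middle of the `m`-th row, and fails only for `m = 2`, which is not a cube.
-/

namespace Nat

theorem choose_mul_choose_sub_comm (N a k : ℕ) :
    N.choose a * (N - a).choose k = N.choose k * (N - k).choose a := by
  have hfirst := choose_mul (n := N) (Nat.le_add_right a k)
  have hsecond := choose_mul (n := N) (Nat.le_add_left k a)
  rw [Nat.add_sub_cancel_left] at hfirst
  rw [Nat.add_sub_cancel] at hsecond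
  rw [← hfirst, ← hsecond, choose_symm_add]

theorem choose_lt_two_mul_choose_pred {m a : ℕ} (ham : a ≤ m) (h : m + 1 < 3 * a) :
    m.choose a < 2 * m.choose (a - 1) := by
  obtain ⟨b, rfl⟩ : ∃ b, a = b + 1 := ⟨a - 1, by omega⟩
  have hpos : 0 < m.choose b := choose_pos (by omega)
  rw [Nat.add_sub_cancel]
  have : m.choose (b + 1) * (b + 1) < 2 * m.choose b * (b + 1) :=
    calc m.choose (b + 1) * (b + 1) = m.choose b * (m - b) := choose_succ_right_eq m b
      _ < m.choose b * (2 * (b + 1)) := Nat.mul_lt_mul_of_pos_left (by omega) hpos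
      _ = 2 * m.choose b * (b + 1) := by ring
  exact Nat.lt_of_mul_lt_mul_right this

theorem two_mul_choose_lt_choose_add_two {m a : ℕ} (ham : a ≤ m) (h : m + 1 < 3 * a) :
    2 * m.choose a < (m + 2).choose a := by
  obtain ⟨b, rfl⟩ : ∃ b, a = b + 1 := ⟨a - 1, by omega⟩
  have hpred := choose_lt_two_mul_choose_pred ham h
  rw [Nat.add_sub_cancel] at hpred
  have hpascal : (m + 2).choose (b + 1) = m.choose (b + 1) + m.choose b + (m + 1).choose b := by
    rw [choose_succ_succ', choose_succ_succ']
    ac_rfl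
  have hmono : m.choose b ≤ (m + 1).choose b := choose_le_succ m b
  omega

theorem two_mul_choose_sub_lt_choose {m k a : ℕ} (hk : 2 ≤ k) (ham : a ≤ m)
    (h : m + 1 < 3 * a) : 2 * (m + k - a).choose k < (m + k).choose k := by
  have hident := choose_mul_choose_sub_comm (m + k) a k
  rw [Nat.add_sub_cancel] at hident
  have hgrow : 2 * m.choose a < (m + k).choose a :=
    (two_mul_choose_lt_choose_add_two ham h).trans_le (choose_le_choose a (by omega))
  have hpos : 0 < (m + k).choose k := choose_pos (by omega)
  refine Nat.lt_of_mul_lt_mul_left (a := (m + k).choose a) ?_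
  calc (m + k).choose a * (2 * (m + k - a).choose k)
      = (m + k).choose k * (2 * m.choose a) := by rw [Nat.mul_left_comm, hident]; ring
    _ < (m + k).choose k * (m + k).choose a := Nat.mul_lt_mul_of_pos_left hgrow hpos
    _ = (m + k).choose a * (m + k).choose k := Nat.mul_comm _ _

end Nat

theorem stmt_4 (n : ℕ) (hn : 2 ≤ n) :
    Nat.choose (n ^ 3 - ((n - 1) ^ 3 + 1) / 2) (3 * n ^ 2 - 3 * n + 1) +
      Nat.choose (n ^ 3 - ((n - 1) ^ 3 + 2) / 2) (3 * n ^ 2 - 3 * n + 1) <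
      Nat.choose (n ^ 3) (3 * n ^ 2 - 3 * n + 1) := by
  obtain ⟨p, rfl⟩ : ∃ p, n = p + 2 := ⟨n - 2, by omega⟩
  have hm : p + 2 - 1 = p + 1 := by omega
  have hk : 3 * (p + 2) ^ 2 - 3 * (p + 2) + 1 = 3 * p ^ 2 + 9 * p + 7 := by
    have : 3 * (p + 2) ^ 2 = 3 * p ^ 2 + 12 * p + 12 := by ring
    omega
  have hcube : (p + 2) ^ 3 = (p + 1) ^ 3 + (3 * p ^ 2 + 9 * p + 7) := by ring
  rw [hm, hk, hcube]
  set m := (p + 1) ^ 3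
  set k := 3 * p ^ 2 + 9 * p + 7
  have hm_cases : m = 1 ∨ 8 ≤ m := by
    rcases Nat.eq_zero_or_pos p with rfl | hp
    · simp [m]
    · exact Or.inr (by simpa using Nat.pow_le_pow_left (show 2 ≤ p + 1 by omega) 3)
  have hmain := Nat.two_mul_choose_sub_lt_choose (m := m) (k := k) (a := (m + 1) / 2)
    (by omega) (by omega) (by omega)
  have hanti : (m + k - (m + 2) / 2).choose k ≤ (m + k - (m + 1) / 2).choose k :=
    Nat.choose_le_choose k (by omega)
  omega
end

section
/- For all integers n ≥ 1, ∑_{k=n²}^{3n²-3n+1} C(n³, k) < C(n³ + 3n² - 3n + 1, n³). -/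
theorem stmt_9 (n : ℕ) (hn : 1 ≤ n) :
    ∑ k ∈ Finset.Icc (n ^ 2) (3 * n ^ 2 - 3 * n + 1), Nat.choose (n ^ 3) k <
      Nat.choose (n ^ 3 + 3 * n ^ 2 - 3 * n + 1) (n ^ 3) := by
  set N := n ^ 3 with hN
  set m := 3 * n ^ 2 - 3 * n + 1 with hm
  have hn2 : n ≤ n ^ 2 := Nat.le_self_pow two_ne_zero n
  have harith : n ^ 3 + 3 * n ^ 2 - 3 * n + 1 = N + m := by omega
  rw [harith, Nat.choose_symm_add, Nat.add_choose_eq,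
    Finset.Nat.sum_antidiagonal_eq_sum_range_succ_mk]
  calc ∑ k ∈ Finset.Icc (n ^ 2) m, N.choose k
      ≤ ∑ k ∈ Finset.Icc (n ^ 2) m, N.choose k * m.choose (m - k) := by
        refine Finset.sum_le_sum fun k _ => ?_
        exact Nat.le_mul_of_pos_right _ (Nat.choose_pos (Nat.sub_le m k))
    _ < ∑ k ∈ Finset.range (m + 1), N.choose k * m.choose (m - k) := by
        refine Finset.sum_lt_sum_of_subset (fun k hk => ?_) (i := 0)
          (Finset.mem_range.2 (Nat.succ_pos m)) ?_ ?_ (fun j _ _ => Nat.zero_le _)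
        · simp only [Finset.mem_Icc] at hk
          exact Finset.mem_range.2 (Nat.lt_succ_of_le hk.2)
        · simp only [Finset.mem_Icc, not_and, not_le]
          intro h; nlinarith
        · simp
end

section
/- For all integers n ≥ 3, ∑_{k=0}^{2n²-3n+1} C(n³, n²+k) ≤ C(n³ + 2n² - 3n + 1, 3n² - 3n + 1). -/
lemma aux_sum_choose (N a : ℕ) :
    ∀ m, ∑ k ∈ Finset.range (m + 1), Nat.choose N (a + k) ≤ Nat.choose (N + m) (a + m) := by
  intro m
  induction m with
  | zero => simp
  | succ m ih =>
    rw [Finset.sum_range_succ]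
    calc ∑ k ∈ Finset.range (m + 1), Nat.choose N (a + k) + Nat.choose N (a + (m + 1))
        ≤ Nat.choose (N + m) (a + m) + Nat.choose (N + m) (a + (m + 1)) := by
          exact Nat.add_le_add ih (Nat.choose_le_choose _ (by omega))
      _ = Nat.choose (N + (m + 1)) (a + (m + 1)) := by
          have : N + (m + 1) = (N + m) + 1 := by omega
          rw [this, show a + (m + 1) = (a + m) + 1 by omega, Nat.choose_succ_succ]

theorem stmt_10 (n : ℕ) (hn : 3 ≤ n) :
    ∑ k ∈ Finset.range (2 * n ^ 2 - 3 * n + 1 + 1), Nat.choose (n ^ 3) (n ^ 2 + k) ≤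
      Nat.choose (n ^ 3 + 2 * n ^ 2 - 3 * n + 1) (3 * n ^ 2 - 3 * n + 1) := by
  have h3n : 3 * n ≤ 2 * n ^ 2 := by nlinarith
  have key := aux_sum_choose (n ^ 3) (n ^ 2) (2 * n ^ 2 - 3 * n + 1)
  have e1 : n ^ 3 + (2 * n ^ 2 - 3 * n + 1) = n ^ 3 + 2 * n ^ 2 - 3 * n + 1 := by omega
  have e2 : n ^ 2 + (2 * n ^ 2 - 3 * n + 1) = 3 * n ^ 2 - 3 * n + 1 := by omega
  rwa [e1, e2] at key
end

section
/- The 3×3×3 tensor Q with frontal layers (1/2)·[[0,1,1],[1,1,0],[1,0,1]], (1/2)·[[1,1,0],[0,1,1],[1,0,1]], (1/2)·[[1,0,1],[1,0,1],[0,2,0]] is line-stochastic (every line sum along each of the three directions equals 1), but Q is not a convex combination of (0,1)-valued line-stochastic tensors. -/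
/-- A real `3 × 3 × 3` tensor is line-stochastic if it is nonnegative and all
line sums in the three directions equal `1`. -/
def LineStochastic3 (A : Fin 3 → Fin 3 → Fin 3 → ℝ) : Prop :=
  (∀ i j k, 0 ≤ A i j k) ∧
  (∀ j k, (∑ i, A i j k) = 1) ∧
  (∀ i k, (∑ j, A i j k) = 1) ∧
  (∀ i j, (∑ k, A i j k) = 1)

/-- The tensor `Q` with frontal layers
`(1/2)[[0,1,1],[1,1,0],[1,0,1]]`, `(1/2)[[1,1,0],[0,1,1],[1,0,1]]`,
`(1/2)[[1,0,1],[1,0,1],[0,2,0]]`; `Q i j k` is the `(i,j)` entry of layer `k`. -/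
noncomputable def Q : Fin 3 → Fin 3 → Fin 3 → ℝ := fun i j k =>
  (![![![0, 1, 1], ![1, 1, 0], ![1, 0, 1]],
     ![![1, 1, 0], ![0, 1, 1], ![1, 0, 1]],
     ![![1, 0, 1], ![1, 0, 1], ![0, 2, 0]]] k i j) / 2

/-!
A permutation tensor carrying positive weight in a convex combination equal to `Q` must vanish
wherever `Q` does. But the zero pattern of `Q` admits no Latin square: in layer `k = 2`,
column `j = 1` forces `P 2 1 2 = 1`, so rows `0, 1` of that layer are filled by one of the two
diagonals of columns `0, 2`, and following the lines from either choice through layers `0` and `1`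
puts two ones on the same line.
-/

def IsPermTensor3 (P : Fin 3 → Fin 3 → Fin 3 → ℝ) : Prop :=
  LineStochastic3 P ∧ ∀ i j k, P i j k = 0 ∨ P i j k = 1

lemma lineStochastic3_Q : LineStochastic3 Q := by
  refine ⟨?_, ?_, ?_, ?_⟩ <;> intro i j <;> try intro k
  all_goals fin_cases i <;> fin_cases j <;> try fin_cases k
  all_goals norm_num [Q, Fin.sum_univ_three, Matrix.cons_val_two]

lemma not_isPermTensor3_of_support_subset {P : Fin 3 → Fin 3 → Fin 3 → ℝ} (hP : IsPermTensor3 P)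
    (hsupp : ∀ i j k, Q i j k = 0 → P i j k = 0) : False := by
  obtain ⟨⟨-, hi, hj, hk⟩, h01⟩ := hP
  simp only [Fin.sum_univ_three] at hi hj hk
  obtain ⟨z000, z120, z210, z021, z101, z211, z012, z112, z202, z222⟩ :
      P 0 0 0 = 0 ∧ P 1 2 0 = 0 ∧ P 2 1 0 = 0 ∧ P 0 2 1 = 0 ∧ P 1 0 1 = 0 ∧
      P 2 1 1 = 0 ∧ P 0 1 2 = 0 ∧ P 1 1 2 = 0 ∧ P 2 0 2 = 0 ∧ P 2 2 2 = 0 := by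
    refine ⟨hsupp 0 0 0 ?_, hsupp 1 2 0 ?_, hsupp 2 1 0 ?_, hsupp 0 2 1 ?_, hsupp 1 0 1 ?_,
      hsupp 2 1 1 ?_, hsupp 0 1 2 ?_, hsupp 1 1 2 ?_, hsupp 2 0 2 ?_, hsupp 2 2 2 ?_⟩ <;>
    norm_num [Q, Matrix.cons_val_two]
  rcases h01 0 0 2 with h | h
  · linarith [hj 0 2, hi 0 2, hk 0 2, hj 0 0, hi 1 0, hj 1 0, hk 1 0]
  · linarith [hj 0 2, hi 2 2, hk 0 0, hj 0 1, hi 1 1, hj 1 1, hk 1 2]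

lemma eq_zero_of_sum_mul_eq_zero_of_pos {ι : Type*} [Fintype ι] {l f : ι → ℝ}
    (hl : ∀ s, 0 ≤ l s) (hf : ∀ s, 0 ≤ f s) (h : ∑ s, l s * f s = 0) {s : ι} (hs : 0 < l s) :
    f s = 0 :=
  (mul_eq_zero.mp <| (Finset.sum_eq_zero_iff_of_nonneg fun t _ => mul_nonneg (hl t) (hf t)).mp h
    s (Finset.mem_univ s)).resolve_left hs.ne'

theorem stmt_18 :
    LineStochastic3 Q ∧
      ¬ ∃ (m : ℕ) (l : Fin m → ℝ) (T : Fin m → Fin 3 → Fin 3 → Fin 3 → ℝ),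
        (∀ s, 0 ≤ l s) ∧ (∑ s, l s) = 1 ∧
        (∀ s, LineStochastic3 (T s) ∧ ∀ i j k, T s i j k = 0 ∨ T s i j k = 1) ∧
        (∀ i j k, Q i j k = ∑ s, l s * T s i j k) := by
  refine ⟨lineStochastic3_Q, ?_⟩
  rintro ⟨m, l, T, hl, hsum, hT, hQ⟩
  obtain ⟨s, -, hs⟩ : ∃ s ∈ Finset.univ, (0 : Fin m → ℝ) s < l s :=
    Finset.exists_lt_of_sum_lt (by simp [hsum])
  refine not_isPermTensor3_of_support_subset (hT s) fun i j k hq => ?_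
  exact eq_zero_of_sum_mul_eq_zero_of_pos hl (fun t => (hT t).1.1 i j k) (hQ i j k ▸ hq) hs
end

section
/- For all integers n ≥ 2, C(n³ - ⌊((n-1)³+1)/2⌋, 3n²-3n+1) + C(n³ - ⌊((n-1)³+2)/2⌋, 3n²-3n+1) < C(n³ + 3n² - 3n + 1, n³). -/
lemma auxA (N k : ℕ) : ∀ j, N.choose (k+1) + j * N.choose k ≤ (N+j).choose (k+1) := by
  intro j
  induction j with
  | zero => simp
  | succ j ih =>
    have hp : (N + (j+1)).choose (k+1) = (N+j).choose k + (N+j).choose (k+1) := by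
      rw [← Nat.add_assoc]
      exact Nat.choose_succ_succ _ _
    have h2 : N.choose k ≤ (N+j).choose k := Nat.choose_le_choose _ (Nat.le_add_right _ _)
    calc N.choose (k+1) + (j+1) * N.choose k
        = (N.choose (k+1) + j * N.choose k) + N.choose k := by ring
      _ ≤ (N+j).choose (k+1) + (N+j).choose k := add_le_add ih h2
      _ = (N + (j+1)).choose (k+1) := by rw [hp]; ring

lemma auxB (N k : ℕ) (h1 : k ≤ N) (h2 : N - k < (k+1)*(k+1)) :
    N.choose (k+1) < (k+1) * N.choose k := by
  have key := Nat.choose_succ_right_eq N k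
  have hpos : 0 < N.choose k := Nat.choose_pos h1
  have hlt : N.choose (k+1) * (k+1) < ((k+1) * N.choose k) * (k+1) := by
    rw [key]
    calc N.choose k * (N-k) < N.choose k * ((k+1)*(k+1)) := by
            exact mul_lt_mul_of_pos_left h2 hpos
      _ = ((k+1) * N.choose k) * (k+1) := by ring
  exact Nat.lt_of_mul_lt_mul_right hlt

theorem stmt_19 (n : ℕ) (hn : 2 ≤ n) :
    Nat.choose (n ^ 3 - ((n - 1) ^ 3 + 1) / 2) (3 * n ^ 2 - 3 * n + 1) +
      Nat.choose (n ^ 3 - ((n - 1) ^ 3 + 2) / 2) (3 * n ^ 2 - 3 * n + 1) <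
      Nat.choose (n ^ 3 + 3 * n ^ 2 - 3 * n + 1) (n ^ 3) := by
  have hk3 : 3*n ≤ 3*n^2 := by nlinarith
  have e1 : n ^ 3 + 3 * n ^ 2 - 3 * n + 1 = n^3 + (3*n^2-3*n+1) := by
    rw [Nat.add_sub_assoc hk3, Nat.add_assoc]
  rw [e1]
  set k := 3*n^2 - 3*n with hkdef
  have hkk : k + 3*n = 3*n^2 := Nat.sub_add_cancel hk3
  have hkN : k ≤ n^3 := by
    have h : 3*n^2 ≤ n^3 + 3*n := by nlinarith
    omega
  have hsq : n^3 < (k+1)*(k+1) := by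
    have h1 : n^2 ≤ k + 1 := by
      have : n^2 + 3*n ≤ 3*n^2 + 1 := by nlinarith
      omega
    have h2 : n^3 < n^2 * n^2 := by nlinarith
    calc n^3 < n^2 * n^2 := h2
      _ ≤ (k+1)*(k+1) := Nat.mul_le_mul h1 h1
  have hsub : n^3 - k < (k+1)*(k+1) := lt_of_le_of_lt (Nat.sub_le _ _) hsq
  have e2 : (n^3+(k+1)).choose (n^3) = (n^3+(k+1)).choose (k+1) := by
    have h := Nat.choose_symm (Nat.le_add_left (k+1) (n^3))
    rwa [Nat.add_sub_cancel] at h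
  rw [e2]
  have hB := auxB (n^3) k hkN hsub
  calc (n ^ 3 - ((n - 1) ^ 3 + 1) / 2).choose (k+1) + (n ^ 3 - ((n - 1) ^ 3 + 2) / 2).choose (k+1)
      ≤ (n^3).choose (k+1) + (n^3).choose (k+1) :=
        add_le_add (Nat.choose_le_choose _ (Nat.sub_le _ _)) (Nat.choose_le_choose _ (Nat.sub_le _ _))
    _ < (n^3).choose (k+1) + (k+1) * (n^3).choose k := Nat.add_lt_add_left hB _
    _ ≤ (n^3 + (k+1)).choose (k+1) := auxA (n^3) k (k+1)
end
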